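/- For strings W and A over an alphabet, if W is a subsequence of A, then for every k with 0 ≤ k ≤ |W|, the prefix W(0,k] is a subsequence of the shortest prefix of A containing W(0,k], and the suffix W(k,|W|] is a subsequence of the corresponding suffix of A; moreover A decomposes as the concatenation of that shortest prefix, the middle segment Middle(A,W,k), and the shortest suffix containing W(k,|W|]. -/

import Mathlib

/-!
Split `A = A₁ ++ A₂` with `W.take k <+ A₁` and `W.drop k <+ A₂`. The shortest prefix containing
`W.take k` then fits inside `A₁` and the shortest suffix containing `W.drop k` inside `A₂`, so the
two do not overlap and `A` is prefix ++ middle ++ suffix.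
-/

open List

/-- Length of the shortest prefix of `A` containing `W` as a subsequence. -/
noncomputable def minPrefixLen {α : Type*} (A W : List α) : ℕ :=
  sInf {n | W <+ A.take n}

/-- Length of the shortest suffix of `A` containing `W` as a subsequence. -/
noncomputable def minSuffixLen {α : Type*} (A W : List α) : ℕ :=
  sInf {n | W <+ A.drop (A.length - n)}

/-- `Middle A W k`: what remains of `A` after deleting the shortest prefix containing
`W.take k` as a subsequence and the shortest suffix containing `W.drop k` as a subsequence. -/
noncomputable def Middle {α : Type*} (A W : List α) (k : ℕ) : List α :=
  (A.take (A.length - minSuffixLen A (W.drop k))).drop (minPrefixLen A (W.take k))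

section MinLen

variable {α : Type*} {A U V W : List α} {n : ℕ}

theorem minPrefixLen_le (h : W <+ A.take n) : minPrefixLen A W ≤ n :=
  Nat.sInf_le h

theorem sublist_take_minPrefixLen (h : W <+ A) : W <+ A.take (minPrefixLen A W) :=
  Nat.sInf_mem (s := {n | W <+ A.take n}) ⟨A.length, by simpa using h⟩

theorem minSuffixLen_le (h : W <+ A.drop (A.length - n)) : minSuffixLen A W ≤ n :=
  Nat.sInf_le h

theorem sublist_drop_minSuffixLen (h : W <+ A) : W <+ A.drop (A.length - minSuffixLen A W) :=
  Nat.sInf_mem (s := {n | W <+ A.drop (A.length - n)}) ⟨A.length, by simpa using h⟩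

theorem minPrefixLen_add_minSuffixLen_le (h : U ++ V <+ A) :
    minPrefixLen A U + minSuffixLen A V ≤ A.length := by
  obtain ⟨A₁, A₂, rfl, hU, hV⟩ := append_sublist_iff.mp h
  have hp : minPrefixLen (A₁ ++ A₂) U ≤ A₁.length := minPrefixLen_le (by simpa using hU)
  have hs : minSuffixLen (A₁ ++ A₂) V ≤ A₂.length := minSuffixLen_le (by simpa using hV)
  rw [length_append]
  omega

end MinLen

theorem take_append_drop_take_append_drop {α : Type*} (A : List α) {m n : ℕ} (h : m ≤ n) :
    A.take m ++ (A.take n).drop m ++ A.drop n = A := by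
  have hm : A.take m = (A.take n).take m := by rw [take_take, min_eq_left h]
  rw [hm, take_append_drop, take_append_drop]

theorem stmt0_general {α : Type*} (A W : List α) (h : W <+ A) (k : ℕ) :
    W.take k <+ A.take (minPrefixLen A (W.take k)) ∧
    W.drop k <+ A.drop (A.length - minSuffixLen A (W.drop k)) ∧
    A = A.take (minPrefixLen A (W.take k)) ++ Middle A W k ++
        A.drop (A.length - minSuffixLen A (W.drop k)) := by
  have hsplit : W.take k ++ W.drop k <+ A := by rwa [take_append_drop]
  have hdisjoint := minPrefixLen_add_minSuffixLen_le hsplit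
  refine ⟨sublist_take_minPrefixLen ((take_sublist k W).trans h),
    sublist_drop_minSuffixLen ((drop_sublist k W).trans h), ?_⟩
  exact (take_append_drop_take_append_drop A (by omega)).symm

theorem stmt0 {α : Type*} (A W : List α) (h : W <+ A) (k : ℕ) (hk : k ≤ W.length) :
    W.take k <+ A.take (minPrefixLen A (W.take k)) ∧
    W.drop k <+ A.drop (A.length - minSuffixLen A (W.drop k)) ∧
    A = A.take (minPrefixLen A (W.take k)) ++ Middle A W k ++
        A.drop (A.length - minSuffixLen A (W.drop k)) :=
  stmt0_general A W h k
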